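/- arXiv:1308.2859 — 2 statements merged into one kernel-verified Lean document; each statement's English description precedes it below -/
import Mathlib

section
/- For 0 < q < 1 and n ∈ ℤ, the ₁φ₁ q-Bessel function of integer order satisfies J_{-n}(w; q²) = (-q)^n J_n(w q^n; q²). -/
/-- The finite q-shifted factorial `(a;q)_k` over `ℂ`. -/
noncomputable def qpC (q a : ℂ) (k : ℕ) : ℂ := ∏ i ∈ Finset.range k, (1 - a * q ^ i)

/-- The infinite q-shifted factorial `(a;q)_∞` over `ℂ`. -/
noncomputable def qpInfC (q a : ℂ) : ℂ := ∏' i : ℕ, (1 - a * q ^ i)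

/-- The Wall polynomial `p_n(x;a;q) = ₂φ₁(q^{-n},0;aq;q,qx)` over `ℂ`. -/
noncomputable def wallC (n : ℕ) (x a q : ℂ) : ℂ :=
  ∑ j ∈ Finset.range (n + 1),
    qpC q (q ^ (-(n : ℤ))) j / (qpC q (a * q) j * qpC q q j) * (q * x) ^ j
/-- The `₁φ₁` q-Bessel function `J_n(x;q²)` of integer order `n` with complex argument,
in the combined form encoding the standard convention for negative integer order. -/
noncomputable def JzC (q : ℝ) (n : ℤ) (x : ℂ) : ℂ :=
  x ^ n * (∑' k : ℕ, (-1) ^ k * (q : ℂ) ^ (k * (k - 1)) * ((q : ℂ) ^ 2 * x ^ 2) ^ k *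
      qpInfC ((q : ℂ) ^ 2) ((q : ℂ) ^ (2 * n + 2 + 2 * (k : ℤ))) /
        qpC ((q : ℂ) ^ 2) ((q : ℂ) ^ 2) k) /
    qpInfC ((q : ℂ) ^ 2) ((q : ℂ) ^ 2)

/-! For order `-m` with `m : ℕ`, the terms `k < m` of the series vanish, because
`(q^{2(k-m+1)}; q²)_∞` contains the factor `1 - q⁰`. After the shift `k = j + m`, the splittings
`(q^{2j+2}; q²)_∞ = (q^{2j+2}; q²)_m (q^{2j+2m+2}; q²)_∞` and
`(q²; q²)_{j+m} = (q²; q²)_j (q^{2j+2}; q²)_m` make each term a fixed multiple of the `j`-th term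
of the series of order `m` at `w q^m`. Negative orders follow by substituting `w ↦ w q^{-n}`. -/

lemma qpC_add (q a : ℂ) (j m : ℕ) : qpC q a (j + m) = qpC q a j * qpC q (a * q ^ j) m := by
  simp only [qpC, Finset.prod_range_add, pow_add, mul_assoc]

lemma qpC_ne_zero {q a : ℂ} (hq : ‖q‖ ≤ 1) (ha : ‖a‖ < 1) (m : ℕ) : qpC q a m ≠ 0 := by
  refine Finset.prod_ne_zero_iff.mpr fun i _ => sub_ne_zero.mpr fun h => ?_
  have : ‖a * q ^ i‖ < 1 := by
    rw [norm_mul, norm_pow]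
    exact mul_lt_one_of_nonneg_of_lt_one_left (norm_nonneg a) ha (pow_le_one₀ (norm_nonneg q) hq)
  rw [← h, norm_one] at this
  exact this.false

lemma multipliable_one_sub_mul_pow {q : ℂ} (hq : ‖q‖ < 1) (a : ℂ) :
    Multipliable fun i : ℕ => 1 - a * q ^ i := by
  simpa only [sub_eq_add_neg] using
    Complex.multipliable_one_add_of_summable ((summable_geometric_of_norm_lt_one hq).mul_left a).neg

lemma qpInfC_eq_zero {q a : ℂ} {i : ℕ} (h : a * q ^ i = 1) : qpInfC q a = 0 := by
  have hi : 1 - a * q ^ i = 0 := by rw [h, sub_self]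
  exact tprod_of_exists_eq_zero ⟨i, hi⟩

lemma qpInfC_eq_qpC_mul {q : ℂ} (hq : ‖q‖ < 1) (a : ℂ) (m : ℕ) :
    qpInfC q a = qpC q a m * qpInfC q (a * q ^ m) := by
  have hshift : HasProd (fun i => 1 - a * q ^ (i + m)) (qpInfC q (a * q ^ m)) := by
    simpa only [qpInfC, pow_add, mul_assoc, mul_comm (q ^ m)] using
      (multipliable_one_sub_mul_pow hq (a * q ^ m)).hasProd
  exact (hshift.prod_range_mul (f := fun i => 1 - a * q ^ i)).tprod_eq

lemma tsum_eq_tsum_add_of_eq_zero {α : Type*} [AddCommMonoid α] [TopologicalSpace α]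
    {f : ℕ → α} {m : ℕ} (h : ∀ k < m, f k = 0) : ∑' k, f k = ∑' j, f (j + m) := by
  refine ((add_left_injective m).tsum_eq fun k hk => ?_).symm
  have hmk : m ≤ k := not_lt.mp fun hlt => hk (h k hlt)
  exact ⟨k - m, Nat.sub_add_cancel hmk⟩

noncomputable def qBesselTerm (Q : ℂ) (n : ℤ) (x : ℂ) (k : ℕ) : ℂ :=
  (-1) ^ k * Q ^ (k * (k - 1)) * (Q ^ 2 * x ^ 2) ^ k *
    qpInfC (Q ^ 2) (Q ^ (2 * n + 2 + 2 * (k : ℤ))) / qpC (Q ^ 2) (Q ^ 2) k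

lemma JzC_eq_tsum_qBesselTerm (q : ℝ) (n : ℤ) (x : ℂ) :
    JzC q n x = x ^ n * (∑' k, qBesselTerm q n x k) / qpInfC ((q : ℂ) ^ 2) ((q : ℂ) ^ 2) :=
  rfl

-- A normal form free of the truncated subtraction `k - 1`.
lemma qBesselTerm_eq (Q : ℂ) (n : ℤ) (x : ℂ) (k : ℕ) :
    qBesselTerm Q n x k = (-1) ^ k * Q ^ (k * (k + 1)) * x ^ (2 * k) *
      qpInfC (Q ^ 2) (Q ^ (2 * n + 2 + 2 * (k : ℤ))) / qpC (Q ^ 2) (Q ^ 2) k := by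
  have hexp : k * (k - 1) + 2 * k = k * (k + 1) := by
    rcases k with _ | k
    · rfl
    · rw [Nat.add_sub_cancel]; ring
  have hpow : Q ^ (k * (k - 1)) * (Q ^ 2 * x ^ 2) ^ k = Q ^ (k * (k + 1)) * x ^ (2 * k) := by
    rw [mul_pow, ← mul_assoc, ← pow_mul, ← pow_add, hexp, ← pow_mul]
  rw [qBesselTerm, mul_assoc ((-1) ^ k), hpow, ← mul_assoc]

lemma qBesselTerm_neg_of_lt {Q : ℂ} (hQ : Q ≠ 0) {m k : ℕ} (hk : k < m) (x : ℂ) :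
    qBesselTerm Q (-m) x k = 0 := by
  have hvanish : Q ^ (2 * -(m : ℤ) + 2 + 2 * (k : ℤ)) * (Q ^ 2) ^ (m - 1 - k) = 1 := by
    rw [← pow_mul, ← zpow_natCast, ← zpow_add₀ hQ]
    convert zpow_zero Q using 2
    omega
  rw [qBesselTerm, qpInfC_eq_zero hvanish, mul_zero, zero_div]

lemma qBesselTerm_neg_add {Q : ℂ} (hQ : ‖Q‖ < 1) (m j : ℕ) (x : ℂ) :
    qBesselTerm Q (-m) x (j + m) =
      (-Q) ^ m * Q ^ (m * m) * x ^ (2 * m) * qBesselTerm Q m (x * Q ^ m) j := by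
  have hQ2 : ‖Q ^ 2‖ < 1 := by
    rw [norm_pow]; exact pow_lt_one₀ (norm_nonneg Q) hQ two_ne_zero
  have hlow : Q ^ (2 * -(m : ℤ) + 2 + 2 * ((j + m : ℕ) : ℤ)) = (Q ^ 2) ^ (j + 1) := by
    rw [← pow_mul, ← zpow_natCast]; congr 1; push_cast; ring
  have hhigh : Q ^ (2 * (m : ℤ) + 2 + 2 * (j : ℤ)) = (Q ^ 2) ^ (j + 1) * (Q ^ 2) ^ m := by
    rw [← pow_add, ← pow_mul, ← zpow_natCast]; congr 1; push_cast; ring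
  have hcancel : qpC (Q ^ 2) ((Q ^ 2) ^ (j + 1)) m ≠ 0 :=
    qpC_ne_zero hQ2.le (by rw [norm_pow]; exact pow_lt_one₀ (norm_nonneg _) hQ2 j.succ_ne_zero) m
  have hden : qpC (Q ^ 2) (Q ^ 2) j ≠ 0 := qpC_ne_zero hQ2.le hQ2 j
  rw [qBesselTerm_eq, qBesselTerm_eq, hlow, hhigh, qpInfC_eq_qpC_mul hQ2 _ m, qpC_add,
    ← pow_succ']
  field_simp
  ring

lemma tsum_qBesselTerm_neg {Q : ℂ} (hQ0 : Q ≠ 0) (hQ : ‖Q‖ < 1) (m : ℕ) (x : ℂ) :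
    ∑' k, qBesselTerm Q (-m) x k =
      (-Q) ^ m * Q ^ (m * m) * x ^ (2 * m) * ∑' j, qBesselTerm Q m (x * Q ^ m) j := by
  rw [tsum_eq_tsum_add_of_eq_zero fun k hk => qBesselTerm_neg_of_lt hQ0 hk x, ← tsum_mul_left]
  exact tsum_congr fun j => qBesselTerm_neg_add hQ m j x

lemma JzC_neg_natCast {q : ℝ} (hq0 : 0 < q) (hq1 : q < 1) (m : ℕ) (w : ℂ) :
    JzC q (-m) w = (-(q : ℂ)) ^ m * JzC q m (w * (q : ℂ) ^ m) := by
  have hQ0 : (q : ℂ) ≠ 0 := Complex.ofReal_ne_zero.mpr hq0.ne'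
  have hQ : ‖(q : ℂ)‖ < 1 := by rwa [Complex.norm_real, Real.norm_of_nonneg hq0.le]
  have hw : w ^ (-(m : ℤ)) * w ^ (2 * m) = w ^ m := by
    rw [← zpow_natCast, ← zpow_add' (by omega), ← zpow_natCast]; congr 1; push_cast; ring
  rw [JzC_eq_tsum_qBesselTerm, JzC_eq_tsum_qBesselTerm, tsum_qBesselTerm_neg hQ0 hQ, zpow_natCast]
  linear_combination (-(q : ℂ)) ^ m * (q : ℂ) ^ (m * m) *
    (∑' j, qBesselTerm q m (w * (q : ℂ) ^ m) j) / qpInfC ((q : ℂ) ^ 2) ((q : ℂ) ^ 2) * hw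

/-- `J_{-n}(w;q²) = (-q)^n J_n(wq^n;q²)` for integer order. -/
theorem qBessel_negative_order (q : ℝ) (hq0 : 0 < q) (hq1 : q < 1) (n : ℤ) (w : ℂ) :
    JzC q (-n) w = (-(q : ℂ)) ^ n * JzC q n (w * (q : ℂ) ^ n) := by
  have hQ : (q : ℂ) ≠ 0 := Complex.ofReal_ne_zero.mpr hq0.ne'
  obtain ⟨m, rfl | rfl⟩ := Int.eq_nat_or_neg n
  · simpa only [zpow_natCast] using JzC_neg_natCast hq0 hq1 m w
  · have h := JzC_neg_natCast hq0 hq1 m (w * (q : ℂ) ^ (-(m : ℤ)))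
    rw [mul_assoc, ← zpow_natCast (q : ℂ) m, ← zpow_add₀ hQ, neg_add_cancel, zpow_zero,
      mul_one] at h
    rw [neg_neg, h, ← mul_assoc, ← zpow_natCast (-(q : ℂ)) m, ← zpow_add₀ (neg_ne_zero.mpr hQ),
      neg_add_cancel, zpow_zero, one_mul]
end

section
/- Let 0 < q < 1 and let U : ℓ²(ℕ)⊗ℓ²(ℤ) → ℓ²(ℕ)⊗ℓ²(ℤ) be the unitary e_{n,k} ↦ e_{n,n+k}. With X, Z, Y acting on ℓ²(ℕ) as in the Podleś sphere representation and α, γ the quantum SU(2) operators on ℓ²(ℕ)⊗ℓ²(ℤ), one has U(X⊗1)U* = -γ*α, U(Z⊗1)U* = γ*γ, and U(Y⊗1)U* = -α*γ. -/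
/-- `ℓ²(ℕ × ℤ) ≅ ℓ²(ℕ) ⊗ ℓ²(ℤ)` with complex coefficients. -/
noncomputable abbrev l2NZ : Type := lp (fun _ : ℕ × ℤ => ℂ) 2

/-- The standard orthonormal basis vector `e_{n,k}` of `ℓ²(ℕ) ⊗ ℓ²(ℤ)`. -/
noncomputable def eNZ (n : ℕ) (k : ℤ) : l2NZ := lp.single 2 (n, k) 1

/-!
All operators involved are weighted shifts on the basis `e_{n,k}`, so each identity is checked on
basis vectors. Adjoints are read off from matrix coefficients: if `T e_i = c_i e_{σ i}` with `σ`
injective then `T* e_{σ i} = c̄_i e_i`, giving `U* e_{n,k} = e_{n,k-n}` and `γ* e_{n,k} = qⁿ e_{n,k-1}`,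
while `α* e_{n,k} = √(1-q^{2n+2}) e_{n+1,k}`. Conjugation by `U` turns a step `n ↦ n ± 1` of the
first index into the same step of the second index, which is exactly what `γ` and `γ*` supply.
-/

open ContinuousLinearMap
open scoped lp

namespace lp

variable {ι 𝕜 : Type*} [RCLike 𝕜] [DecidableEq ι]

theorem ext_single_one {F : Type*} [AddCommMonoid F] [Module 𝕜 F] [TopologicalSpace F] [T2Space F]
    {f g : ℓ²(ι, 𝕜) →L[𝕜] F} (h : ∀ i, f (lp.single 2 i 1) = g (lp.single 2 i 1)) : f = g :=
  lp.ext_continuousLinearMap ENNReal.ofNat_ne_top fun i => ext_ring (h i)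

theorem inner_single_one_single_one (i j : ι) :
    inner 𝕜 (lp.single 2 i (1 : 𝕜)) (lp.single 2 j (1 : 𝕜) : ℓ²(ι, 𝕜)) = if i = j then 1 else 0 := by
  rw [lp.inner_single_left, lp.single_apply, Pi.single_apply, eq_comm]
  split_ifs <;> simp

theorem adjoint_apply_eq_of_inner_single (T : ℓ²(ι, 𝕜) →L[𝕜] ℓ²(ι, 𝕜)) {v w : ℓ²(ι, 𝕜)}
    (h : ∀ i, inner 𝕜 (T (lp.single 2 i 1)) v = inner 𝕜 (lp.single 2 i 1) w) :
    adjoint T v = w := by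
  refine lp.ext (funext fun i => ?_)
  have hi := (adjoint_inner_right T (lp.single 2 i 1) v).trans (h i)
  simpa [lp.inner_single_left] using hi

theorem adjoint_apply_single_of_apply_single (T : ℓ²(ι, 𝕜) →L[𝕜] ℓ²(ι, 𝕜)) {σ : ι → ι}
    (hσ : σ.Injective) {c : ι → 𝕜} (hT : ∀ i, T (lp.single 2 i 1) = c i • lp.single 2 (σ i) 1)
    (i : ι) : adjoint T (lp.single 2 (σ i) 1) = starRingEnd 𝕜 (c i) • lp.single 2 i 1 := by
  refine adjoint_apply_eq_of_inner_single T fun j => ?_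
  rw [hT, inner_smul_left, inner_smul_right, inner_single_one_single_one,
    inner_single_one_single_one]
  simp only [hσ.eq_iff]
  split_ifs with hji <;> simp [hji]

end lp

theorem inner_eNZ_eNZ (m n : ℕ) (l k : ℤ) :
    inner ℂ (eNZ m l) (eNZ n k) = if m = n ∧ l = k then 1 else 0 := by
  simp only [eNZ, lp.inner_single_one_single_one, Prod.mk.injEq]

theorem l2NZ_ext_eNZ {S T : l2NZ →L[ℂ] l2NZ} (h : ∀ n k, S (eNZ n k) = T (eNZ n k)) : S = T :=
  lp.ext_single_one fun i => h i.1 i.2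

section WeightedShifts

variable {q : ℝ} {U X Y Z α γ : l2NZ →L[ℂ] l2NZ}

theorem adjoint_U_apply_eNZ (hU : ∀ (n : ℕ) (k : ℤ), U (eNZ n k) = eNZ n (n + k)) (n : ℕ) (k : ℤ) :
    adjoint U (eNZ n k) = eNZ n (k - n) := by
  have hσ : (fun i : ℕ × ℤ => (i.1, i.1 + i.2)).Injective := fun i j hij => by
    simp only [Prod.ext_iff] at hij ⊢
    omega
  have hU' (i : ℕ × ℤ) : U (lp.single 2 i 1) = (1 : ℂ) • lp.single 2 (i.1, i.1 + i.2) 1 := by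
    simpa [eNZ] using hU i.1 i.2
  simpa [eNZ] using lp.adjoint_apply_single_of_apply_single U hσ hU' (n, k - n)

theorem adjoint_γ_apply_eNZ (hγ : ∀ (n : ℕ) (k : ℤ), γ (eNZ n k) = ((q : ℂ) ^ n) • eNZ n (k + 1))
    (n : ℕ) (k : ℤ) : adjoint γ (eNZ n k) = ((q : ℂ) ^ n) • eNZ n (k - 1) := by
  have hσ : (fun i : ℕ × ℤ => (i.1, i.2 + 1)).Injective := fun i j hij => by
    simpa [Prod.ext_iff] using hij
  simpa [eNZ, ← Complex.ofReal_pow, Complex.conj_ofReal] using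
    lp.adjoint_apply_single_of_apply_single γ hσ (fun i => hγ i.1 i.2) (n, k - 1)

theorem adjoint_α_apply_eNZ (hα0 : ∀ k : ℤ, α (eNZ 0 k) = 0)
    (hα : ∀ (n : ℕ) (k : ℤ), α (eNZ (n + 1) k) = ((Real.sqrt (1 - q ^ (2 * n + 2)) : ℂ)) • eNZ n k)
    (n : ℕ) (k : ℤ) :
    adjoint α (eNZ n k) = ((Real.sqrt (1 - q ^ (2 * n + 2)) : ℂ)) • eNZ (n + 1) k := by
  refine lp.adjoint_apply_eq_of_inner_single α fun ⟨m, l⟩ => ?_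
  change inner ℂ (α (eNZ m l)) (eNZ n k) = inner ℂ (eNZ m l) _
  rw [inner_smul_right, inner_eNZ_eNZ]
  cases m with
  | zero => simp [hα0]
  | succ m =>
    simp only [hα, inner_smul_left, inner_eNZ_eNZ, Complex.conj_ofReal, Nat.add_right_cancel_iff]
    split_ifs with h <;> simp [h]

theorem U_conj_X (hU : ∀ (n : ℕ) (k : ℤ), U (eNZ n k) = eNZ n (n + k))
    (hX0 : ∀ k : ℤ, X (eNZ 0 k) = 0)
    (hX : ∀ (n : ℕ) (k : ℤ), X (eNZ (n + 1) k) =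
      (-(q : ℂ) ^ n * (Real.sqrt (1 - q ^ (2 * n + 2)) : ℂ)) • eNZ n k)
    (hα0 : ∀ k : ℤ, α (eNZ 0 k) = 0)
    (hα : ∀ (n : ℕ) (k : ℤ), α (eNZ (n + 1) k) = ((Real.sqrt (1 - q ^ (2 * n + 2)) : ℂ)) • eNZ n k)
    (hγ : ∀ (n : ℕ) (k : ℤ), γ (eNZ n k) = ((q : ℂ) ^ n) • eNZ n (k + 1)) :
    U * X * adjoint U = -(adjoint γ * α) := by
  refine l2NZ_ext_eNZ fun n k => ?_
  simp only [mul_apply_eq_comp, neg_apply, adjoint_U_apply_eNZ hU]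
  cases n with
  | zero => simp [hX0, hα0]
  | succ n =>
    rw [hX, hα, map_smul, map_smul, hU, adjoint_γ_apply_eNZ hγ, smul_smul, ← neg_smul,
      show (n : ℤ) + (k - (n + 1 : ℕ)) = k - 1 by push_cast; ring]
    ring_nf

theorem U_conj_Z (hU : ∀ (n : ℕ) (k : ℤ), U (eNZ n k) = eNZ n (n + k))
    (hZ : ∀ (n : ℕ) (k : ℤ), Z (eNZ n k) = ((q : ℂ) ^ (2 * n)) • eNZ n k)
    (hγ : ∀ (n : ℕ) (k : ℤ), γ (eNZ n k) = ((q : ℂ) ^ n) • eNZ n (k + 1)) :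
    U * Z * adjoint U = adjoint γ * γ := by
  refine l2NZ_ext_eNZ fun n k => ?_
  simp only [mul_apply_eq_comp, adjoint_U_apply_eNZ hU]
  rw [hZ, map_smul, hU, hγ, map_smul, adjoint_γ_apply_eNZ hγ, smul_smul, ← pow_add, two_mul,
    add_sub_cancel, add_sub_cancel_right]

theorem U_conj_Y (hU : ∀ (n : ℕ) (k : ℤ), U (eNZ n k) = eNZ n (n + k))
    (hY : ∀ (n : ℕ) (k : ℤ), Y (eNZ n k) =
      (-(q : ℂ) ^ n * (Real.sqrt (1 - q ^ (2 * n + 2)) : ℂ)) • eNZ (n + 1) k)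
    (hα0 : ∀ k : ℤ, α (eNZ 0 k) = 0)
    (hα : ∀ (n : ℕ) (k : ℤ), α (eNZ (n + 1) k) = ((Real.sqrt (1 - q ^ (2 * n + 2)) : ℂ)) • eNZ n k)
    (hγ : ∀ (n : ℕ) (k : ℤ), γ (eNZ n k) = ((q : ℂ) ^ n) • eNZ n (k + 1)) :
    U * Y * adjoint U = -(adjoint α * γ) := by
  refine l2NZ_ext_eNZ fun n k => ?_
  simp only [mul_apply_eq_comp, neg_apply, adjoint_U_apply_eNZ hU]
  rw [hY, map_smul, hU, hγ, map_smul, adjoint_α_apply_eNZ hα0 hα, smul_smul, ← neg_smul,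
    show ((n + 1 : ℕ) : ℤ) + (k - n) = k + 1 by push_cast; ring]
  ring_nf

end WeightedShifts

theorem podles_embedding_via_U_general (q : ℝ)
    (U X Y Z α γ : l2NZ →L[ℂ] l2NZ)
    (hU : ∀ (n : ℕ) (k : ℤ), U (eNZ n k) = eNZ n (n + k))
    (hX0 : ∀ k : ℤ, X (eNZ 0 k) = 0)
    (hX : ∀ (n : ℕ) (k : ℤ), X (eNZ (n + 1) k) =
      (-(q : ℂ) ^ n * (Real.sqrt (1 - q ^ (2 * n + 2)) : ℂ)) • eNZ n k)
    (hZ : ∀ (n : ℕ) (k : ℤ), Z (eNZ n k) = ((q : ℂ) ^ (2 * n)) • eNZ n k)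
    (hY : ∀ (n : ℕ) (k : ℤ), Y (eNZ n k) =
      (-(q : ℂ) ^ n * (Real.sqrt (1 - q ^ (2 * n + 2)) : ℂ)) • eNZ (n + 1) k)
    (hα0 : ∀ k : ℤ, α (eNZ 0 k) = 0)
    (hα : ∀ (n : ℕ) (k : ℤ), α (eNZ (n + 1) k) =
      ((Real.sqrt (1 - q ^ (2 * n + 2)) : ℂ)) • eNZ n k)
    (hγ : ∀ (n : ℕ) (k : ℤ), γ (eNZ n k) = ((q : ℂ) ^ n) • eNZ n (k + 1)) :
    U * X * ContinuousLinearMap.adjoint U = -(ContinuousLinearMap.adjoint γ * α) ∧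
    U * Z * ContinuousLinearMap.adjoint U = ContinuousLinearMap.adjoint γ * γ ∧
    U * Y * ContinuousLinearMap.adjoint U = -(ContinuousLinearMap.adjoint α * γ) :=
  ⟨U_conj_X hU hX0 hX hα0 hα hγ, U_conj_Z hU hZ hγ, U_conj_Y hU hY hα0 hα hγ⟩

/-- with `U : e_{n,k} ↦ e_{n,n+k}` unitary, `X, Z, Y` the Podleś sphere
operators acting on the first leg, and `α, γ` the quantum `SU(2)` operators,
`U(X⊗1)U* = -γ*α`, `U(Z⊗1)U* = γ*γ`, `U(Y⊗1)U* = -α*γ`. -/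
theorem podles_embedding_via_U (q : ℝ) (hq0 : 0 < q) (hq1 : q < 1)
    (U X Y Z α γ : l2NZ →L[ℂ] l2NZ)
    (hU : ∀ (n : ℕ) (k : ℤ), U (eNZ n k) = eNZ n (n + k))
    (hX0 : ∀ k : ℤ, X (eNZ 0 k) = 0)
    (hX : ∀ (n : ℕ) (k : ℤ), X (eNZ (n + 1) k) =
      (-(q : ℂ) ^ n * (Real.sqrt (1 - q ^ (2 * n + 2)) : ℂ)) • eNZ n k)
    (hZ : ∀ (n : ℕ) (k : ℤ), Z (eNZ n k) = ((q : ℂ) ^ (2 * n)) • eNZ n k)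
    (hY : ∀ (n : ℕ) (k : ℤ), Y (eNZ n k) =
      (-(q : ℂ) ^ n * (Real.sqrt (1 - q ^ (2 * n + 2)) : ℂ)) • eNZ (n + 1) k)
    (hα0 : ∀ k : ℤ, α (eNZ 0 k) = 0)
    (hα : ∀ (n : ℕ) (k : ℤ), α (eNZ (n + 1) k) =
      ((Real.sqrt (1 - q ^ (2 * n + 2)) : ℂ)) • eNZ n k)
    (hγ : ∀ (n : ℕ) (k : ℤ), γ (eNZ n k) = ((q : ℂ) ^ n) • eNZ n (k + 1)) :
    U * X * ContinuousLinearMap.adjoint U = -(ContinuousLinearMap.adjoint γ * α) ∧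
    U * Z * ContinuousLinearMap.adjoint U = ContinuousLinearMap.adjoint γ * γ ∧
    U * Y * ContinuousLinearMap.adjoint U = -(ContinuousLinearMap.adjoint α * γ) :=
  podles_embedding_via_U_general q U X Y Z α γ hU hX0 hX hZ hY hα0 hα hγ
end
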